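/- For every integer k ≥ 7 and every α ∈ {1,...,k}, the graph G'_k(p,q) admits a (pp',α)-ECGC using at most k colors. -/

import Mathlib

/-!
Color `pp'` and `qq'` with `α`, the edges `p'Pᵢ` with the colors other than `α` in increasing
order, the row `PᵢQ₀, …, PᵢQ_{k-2}` with the `k - 1` cyclic successors of the color of `p'Pᵢ` in
`1, …, k`, and `q'Qⱼ` with the `(j + 1)`-st cyclic successor of `α`. Row `i` then misses exactly
the color of `p'Pᵢ` and column `j` exactly the color of `q'Qⱼ`, so the coloring is proper. Taking
the edges layer by layer (`pp'`, the star at `p'`, the `PQ` edges, the star at `q'`, `qq'`), each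
layer by increasing color, every edge sees all smaller colors on edges that come earlier, so the
greedy algorithm along this connected order reproduces the coloring.
-/

open SimpleGraph

/-- One step of the greedy coloring algorithm: color the vertex `w` with the smallest
positive integer not already used on one of its (already colored) neighbours.
Color `0` means "not yet colored". -/
noncomputable def greedyStep {V : Type*} [DecidableEq V] (G : SimpleGraph V)
    (f : V → ℕ) (w : V) : V → ℕ :=
  Function.update f w (sInf {n : ℕ | 0 < n ∧ ∀ z, G.Adj w z → f z ≠ n})

/-- The coloring obtained by greedily coloring the vertices of the list `l` in order,
starting from the partial coloring `f₀`. -/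
noncomputable def greedyFrom {V : Type*} [DecidableEq V] (G : SimpleGraph V)
    (f₀ : V → ℕ) (l : List V) : V → ℕ :=
  l.foldl (greedyStep G) f₀

/-- The greedy coloring of the ordering `l` (all vertices initially uncolored). -/
noncomputable def greedy {V : Type*} [DecidableEq V] (G : SimpleGraph V)
    (l : List V) : V → ℕ :=
  greedyFrom G (fun _ => 0) l

/-- `l` is a connected ordering of the vertices of `G`: it lists every vertex exactly once,
and every vertex other than the first has a neighbour occurring earlier in the list. -/
def IsConnectedOrder {V : Type*} (G : SimpleGraph V) (l : List V) : Prop :=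
  l.Nodup ∧ (∀ w : V, w ∈ l) ∧
    ∀ i : Fin l.length, 0 < (i : ℕ) →
      ∃ j : Fin l.length, (j : ℕ) < (i : ℕ) ∧ G.Adj (l.get i) (l.get j)

/-- `f` is a connected greedy coloring (CGC) of `G`. -/
def IsCGC {V : Type*} [DecidableEq V] (G : SimpleGraph V) (f : V → ℕ) : Prop :=
  ∃ l : List V, IsConnectedOrder G l ∧ f = greedy G l

/-- `f` is an `(x, α)`-connected greedy coloring of `G`: it is obtained from a connected
ordering starting at `x` by coloring `x` with `α` and then coloring each subsequent
vertex with the smallest positive integer not appearing on its already-colored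
neighbours. -/
def IsCGCFrom {V : Type*} [DecidableEq V] (G : SimpleGraph V) (x : V) (α : ℕ)
    (f : V → ℕ) : Prop :=
  ∃ l : List V, IsConnectedOrder G (x :: l) ∧
    f = greedyFrom G (Function.update (fun _ => 0) x α) l

/-- `f` uses exactly `k` colors. -/
def UsesColors {V : Type*} (f : V → ℕ) (k : ℕ) : Prop :=
  ∃ s : Finset ℕ, (∀ w, f w ∈ s) ∧ (∀ c ∈ s, ∃ w, f w = c) ∧ s.card = k

/-- The connected chromatic number of `G`: the least `k` such that some connected greedy
coloring of `G` only uses colors in `{1, …, k}`. -/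
noncomputable def connChrom {V : Type*} [DecidableEq V] (G : SimpleGraph V) : ℕ :=
  sInf {k | ∃ f, IsCGC G f ∧ ∀ w, f w ≤ k}

/-- The vertices of the edge gadget `G'_k(p,q)`: the two parts `P` and `Q` of a complete
bipartite graph `K_{k-1,k-1}`, and the four vertices `p, p', q, q'`. -/
inductive EGVert (k : ℕ) where
  | p : EGVert k
  | p' : EGVert k
  | q : EGVert k
  | q' : EGVert k
  | P : Fin (k - 1) → EGVert k
  | Q : Fin (k - 1) → EGVert k
deriving DecidableEq

/-- The edge gadget `G'_k(p,q)`: a complete bipartite graph with parts `P` and `Q`,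
with `p'` complete to `P`, `q'` complete to `Q`, and the extra edges `pp'` and `qq'`. -/
def EG (k : ℕ) : SimpleGraph (EGVert k) :=
  SimpleGraph.fromRel (fun a b =>
    (∃ i j, a = EGVert.P i ∧ b = EGVert.Q j) ∨
    (∃ i, a = EGVert.p' ∧ b = EGVert.P i) ∨
    (∃ i, a = EGVert.q' ∧ b = EGVert.Q i) ∨
    (a = EGVert.p ∧ b = EGVert.p') ∨
    (a = EGVert.q ∧ b = EGVert.q'))

theorem EG_adj_pp' (k : ℕ) : (EG k).Adj EGVert.p EGVert.p' := by
  rw [EG, SimpleGraph.fromRel_adj]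
  exact ⟨fun h => (by cases h), Or.inl (by tauto)⟩

theorem EG_adj_qq' (k : ℕ) : (EG k).Adj EGVert.q EGVert.q' := by
  rw [EG, SimpleGraph.fromRel_adj]
  exact ⟨fun h => (by cases h), Or.inl (by tauto)⟩

/-- The edge `pp'` of the edge gadget, as a vertex of its line graph. -/
def edgePP (k : ℕ) : (EG k).edgeSet := ⟨s(EGVert.p, EGVert.p'), EG_adj_pp' k⟩

/-- The edge `qq'` of the edge gadget, as a vertex of its line graph. -/
def edgeQQ (k : ℕ) : (EG k).edgeSet := ⟨s(EGVert.q, EGVert.q'), EG_adj_qq' k⟩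

section Greedy

variable {V : Type*} (G : SimpleGraph V)

theorem lineGraph_adj_lift_ne {β : Type*} {c : V → V → β} (hc : ∀ a b, c a b = c b a)
    (hinj : ∀ v w w', G.Adj v w → G.Adj v w' → c v w = c v w' → w = w')
    {e f : G.edgeSet} (h : G.lineGraph.Adj e f) :
    Sym2.lift ⟨c, hc⟩ e ≠ Sym2.lift ⟨c, hc⟩ f := by
  obtain ⟨hne, v, hve, hvf⟩ := SimpleGraph.lineGraph_adj_iff_exists.1 h
  obtain ⟨w, hw⟩ := Sym2.mem_iff_exists.1 hve
  obtain ⟨w', hw'⟩ := Sym2.mem_iff_exists.1 hvf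
  have hvw : G.Adj v w := by rw [← SimpleGraph.mem_edgeSet, ← hw]; exact e.2
  have hvw' : G.Adj v w' := by rw [← SimpleGraph.mem_edgeSet, ← hw']; exact f.2
  rw [hw, hw', Sym2.lift_mk, Sym2.lift_mk]
  intro hcol
  exact hne (Subtype.ext (by rw [hw, hw', hinj v w w' hvw hvw' hcol]))

theorem isConnectedOrder_cons_of_pairwise {r : V → ℕ} {x : V} {l : List V}
    (hnd : (x :: l).Nodup) (hall : ∀ w, w ∈ x :: l)
    (hsort : l.Pairwise (fun a b => r a ≤ r b))
    (hconn : ∀ v ∈ l, ∃ w, G.Adj v w ∧ (w = x ∨ r w < r v)) :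
    IsConnectedOrder G (x :: l) := by
  refine ⟨hnd, hall, ?_⟩
  rintro ⟨_ | n, hn⟩ hpos
  · exact absurd hpos (lt_irrefl 0)
  have hn' : n < l.length := by simpa using hn
  obtain ⟨w, hvw, hw⟩ := hconn l[n] (List.getElem_mem hn')
  rcases List.mem_cons.1 (hall w) with rfl | hwl
  · exact ⟨⟨0, by simp⟩, Nat.succ_pos n, hvw⟩
  have hrw : r w < r l[n] :=
    hw.resolve_left fun hwx => (List.nodup_cons.1 hnd).1 (hwx ▸ hwl)
  obtain ⟨m, hm, rfl⟩ := List.getElem_of_mem hwl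
  have hmn : m < n := by
    by_contra! hnm
    rcases hnm.eq_or_lt with rfl | hlt
    · exact lt_irrefl _ hrw
    · exact not_le.2 hrw (List.pairwise_iff_getElem.1 hsort n m hn' hm hlt)
  exact ⟨⟨m + 1, by simpa using hm⟩, by simpa using hmn, by simpa using hvw⟩

variable [DecidableEq V]

theorem greedyStep_indicator {F : V → ℕ} {S : Set V} {v : V}
    (hproper : ∀ w, G.Adj v w → F v ≠ F w) (hpos : 0 < F v)
    (hwit : ∀ s, 0 < s → s < F v → ∃ w ∈ S, G.Adj v w ∧ F w = s) :
    greedyStep G (S.indicator F) v = (insert v S).indicator F := by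
  have hfree : F v ∈ {n | 0 < n ∧ ∀ w, G.Adj v w → S.indicator F w ≠ n} := by
    refine ⟨hpos, fun w hvw => ?_⟩
    by_cases hw : w ∈ S
    · rw [Set.indicator_of_mem hw]; exact (hproper w hvw).symm
    · rw [Set.indicator_of_notMem hw]; exact hpos.ne
  have hmin : sInf {n | 0 < n ∧ ∀ w, G.Adj v w → S.indicator F w ≠ n} = F v := by
    refine le_antisymm (Nat.sInf_le hfree) (le_csInf ⟨_, hfree⟩ ?_)
    rintro n ⟨hn, hnfree⟩
    by_contra! hlt
    obtain ⟨w, hw, hvw, rfl⟩ := hwit n hn hlt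
    exact hnfree w hvw (Set.indicator_of_mem hw F)
  ext w
  by_cases hwv : w = v
  · subst hwv; simp [greedyStep, hmin]
  · have hins : w ∈ insert v S ↔ w ∈ S := by simp [hwv]
    rw [greedyStep, Function.update_of_ne hwv]
    by_cases hw : w ∈ S
    · rw [Set.indicator_of_mem hw, Set.indicator_of_mem (hins.2 hw)]
    · rw [Set.indicator_of_notMem hw, Set.indicator_of_notMem (mt hins.1 hw)]

theorem greedyFrom_indicator_of_pairwise {F r : V → ℕ}
    (hproper : ∀ v w, G.Adj v w → F v ≠ F w) {l : List V} {S : Set V}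
    (hsort : l.Pairwise (fun a b => r a ≤ r b)) (hpos : ∀ v ∈ l, 0 < F v)
    (hwit : ∀ v ∈ l, ∀ s, 0 < s → s < F v →
      ∃ w, G.Adj v w ∧ F w = s ∧ (w ∈ S ∨ (w ∈ l ∧ r w < r v))) :
    greedyFrom G (S.indicator F) l = (S ∪ {w | w ∈ l}).indicator F := by
  induction l generalizing S with
  | nil => simp [greedyFrom]
  | cons v l ih =>
    rw [List.pairwise_cons] at hsort
    have hstep : greedyStep G (S.indicator F) v = (insert v S).indicator F := by
      refine greedyStep_indicator G (hproper v) (hpos v (by simp)) fun s hs hsv => ?_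
      obtain ⟨w, hvw, rfl, hw⟩ := hwit v (by simp) s hs hsv
      refine ⟨w, ?_, hvw, rfl⟩
      rcases hw with hw | ⟨hw, hrw⟩
      · exact hw
      · rcases List.mem_cons.1 hw with rfl | hw
        · exact absurd hrw (lt_irrefl _)
        · exact absurd (hsort.1 w hw) (not_le.2 hrw)
    have hrest := ih (S := insert v S) hsort.2 (fun u hu => hpos u (by simp [hu]))
      fun u hu s hs hsu => by
        obtain ⟨w, huw, rfl, hw⟩ := hwit u (by simp [hu]) s hs hsu
        refine ⟨w, huw, rfl, ?_⟩
        rcases hw with hw | ⟨hw, hrw⟩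
        · exact .inl (Set.mem_insert_of_mem v hw)
        · rcases List.mem_cons.1 hw with rfl | hw
          · exact .inl (Set.mem_insert w S)
          · exact .inr ⟨hw, hrw⟩
    rw [greedyFrom, List.foldl_cons, ← greedyFrom, hstep, hrest]
    congr 1
    ext w
    simp only [Set.mem_union, Set.mem_insert_iff, Set.mem_ofPred_eq, List.mem_cons]
    tauto

theorem isCGCFrom_of_rank [Finite V] {F r : V → ℕ} {x : V}
    (hproper : ∀ v w, G.Adj v w → F v ≠ F w) (hpos : ∀ v ≠ x, 0 < F v)
    (hgreedy : ∀ v ≠ x, ∀ s, 0 < s → s < F v →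
      ∃ w, G.Adj v w ∧ F w = s ∧ (w = x ∨ r w < r v))
    (hconn : ∀ v ≠ x, ∃ w, G.Adj v w ∧ (w = x ∨ r w < r v)) :
    IsCGCFrom G x (F x) F := by
  have := Fintype.ofFinite V
  set l := (Finset.univ.erase x).toList.mergeSort (fun a b => decide (r a ≤ r b))
  have hmem : ∀ v, v ∈ l ↔ v ≠ x := by simp [l]
  have hsort : l.Pairwise (fun a b => r a ≤ r b) := by
    simpa using List.pairwise_mergeSort (le := fun a b => decide (r a ≤ r b))
      (fun a b c hab hbc => by simp only [decide_eq_true_eq] at *; omega)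
      (fun a b => by simp only [Bool.or_eq_true, decide_eq_true_eq]; omega) _
  have hnd : (x :: l).Nodup :=
    List.nodup_cons.2 ⟨fun h => (hmem x).1 h rfl,
      (List.mergeSort_perm _ _).nodup_iff.2 (Finset.nodup_toList _)⟩
  have hall : ∀ w, w ∈ x :: l := fun w => by
    by_cases hw : w = x
    · simp [hw]
    · exact List.mem_cons_of_mem x ((hmem w).2 hw)
  refine ⟨l, isConnectedOrder_cons_of_pairwise G hnd hall hsort
    fun v hv => hconn v ((hmem v).1 hv), ?_⟩
  have hinit : Function.update (fun _ => 0) x (F x) = ({x} : Set V).indicator F := by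
    ext w; by_cases hw : w = x <;> simp [hw]
  have hcover : ({x} : Set V) ∪ {w | w ∈ l} = Set.univ := by
    ext w; simpa using hall w
  rw [hinit, greedyFrom_indicator_of_pairwise G hproper hsort
    (fun v hv => hpos v ((hmem v).1 hv)) ?_, hcover, Set.indicator_univ]
  intro v hv s hs hsv
  obtain ⟨w, hvw, rfl, hw⟩ := hgreedy v ((hmem v).1 hv) s hs hsv
  refine ⟨w, hvw, rfl, ?_⟩
  by_cases hwx : w = x
  · exact .inl hwx
  · exact .inr ⟨(hmem w).2 hwx, hw.resolve_left hwx⟩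

end Greedy

section Colors

lemma Nat.mod_eq_ite_of_lt_two_mul {x k : ℕ} (hx : x < 2 * k) :
    x % k = if x < k then x else x - k := by
  split_ifs with h
  · exact Nat.mod_eq_of_lt h
  · rw [Nat.mod_eq_sub_mod (not_lt.1 h), Nat.mod_eq_of_lt (by omega)]

def skipColor (α i : ℕ) : ℕ := if i + 1 < α then i + 1 else i + 2

/-- The color `m + 1` steps after `c` in the cyclic order `1 → 2 → ⋯ → k → 1`. -/
def shiftColor (k c m : ℕ) : ℕ := (c + m) % k + 1

variable {k α c m : ℕ}

lemma skipColor_pos (i : ℕ) : 0 < skipColor α i := by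
  unfold skipColor; split_ifs <;> omega

lemma skipColor_ne (i : ℕ) : skipColor α i ≠ α := by
  unfold skipColor; split_ifs <;> omega

lemma skipColor_injective : Function.Injective (skipColor α) := by
  intro i i' h; unfold skipColor at h; split_ifs at h <;> omega

lemma skipColor_le {i : ℕ} (hi : i + 1 < k) : skipColor α i ≤ k := by
  unfold skipColor; split_ifs <;> omega

lemma lt_of_skipColor_le {i : ℕ} (hαk : α ≤ k) (hi : skipColor α i ≤ k) : i + 1 < k := by
  unfold skipColor at hi; split_ifs at hi <;> omega

lemma exists_skipColor_eq (hα : 0 < α) {s : ℕ} (hs : 0 < s) (hsα : s ≠ α) :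
    ∃ i, skipColor α i = s := by
  refine ⟨if s < α then s - 1 else s - 2, ?_⟩
  unfold skipColor; split_ifs <;> omega

lemma shiftColor_pos : 0 < shiftColor k c m := Nat.succ_pos _

lemma shiftColor_le (hk : 0 < k) : shiftColor k c m ≤ k := by
  have := Nat.mod_lt (c + m) hk; unfold shiftColor; omega

lemma shiftColor_ne_self (hck : c ≤ k) (hm : m + 1 < k) : shiftColor k c m ≠ c := by
  unfold shiftColor; rw [Nat.mod_eq_ite_of_lt_two_mul (by omega)]; split_ifs <;> omega

lemma shiftColor_right_injective (hck : c ≤ k) {m' : ℕ} (hm : m < k) (hm' : m' < k)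
    (h : shiftColor k c m = shiftColor k c m') : m = m' := by
  unfold shiftColor at h
  rw [Nat.mod_eq_ite_of_lt_two_mul (by omega), Nat.mod_eq_ite_of_lt_two_mul (by omega)] at h
  split_ifs at h <;> omega

lemma shiftColor_left_injective {c' : ℕ} (hc : 0 < c) (hck : c ≤ k) (hc' : 0 < c')
    (hck' : c' ≤ k) (hm : m < k) (h : shiftColor k c m = shiftColor k c' m) : c = c' := by
  unfold shiftColor at h
  rw [Nat.mod_eq_ite_of_lt_two_mul (by omega), Nat.mod_eq_ite_of_lt_two_mul (by omega)] at h
  split_ifs at h <;> omega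

lemma exists_shiftColor_eq {s : ℕ} (hs : 0 < s) (hsk : s ≤ k) (hc : 0 < c) (hck : c ≤ k)
    (hsc : s ≠ c) : ∃ m, m + 1 < k ∧ shiftColor k c m = s := by
  refine ⟨if c < s then s - c - 1 else k + s - c - 1, by split_ifs <;> omega, ?_⟩
  unfold shiftColor
  rw [Nat.mod_eq_ite_of_lt_two_mul (by split_ifs <;> omega)]
  split_ifs <;> omega

lemma exists_shiftColor_eq_of_right {s : ℕ} (hs : 0 < s) (hsk : s ≤ k) (hm : m < k) :
    ∃ c, 0 < c ∧ c ≤ k ∧ shiftColor k c m = s := by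
  refine ⟨if m + 1 < s then s - 1 - m else k + s - 1 - m, by split_ifs <;> omega,
    by split_ifs <;> omega, ?_⟩
  unfold shiftColor
  rw [Nat.mod_eq_ite_of_lt_two_mul (by split_ifs <;> omega)]
  split_ifs <;> omega

end Colors

namespace EG

instance (k : ℕ) : Fintype (EGVert k) :=
  Fintype.ofList ([.p, .p', .q, .q'] ++ List.ofFn .P ++ List.ofFn .Q) (by intro v; cases v <;> simp)

def AdjCases {k : ℕ} : EGVert k → EGVert k → Prop
  | .p, .p' | .p', .p | .q, .q' | .q', .q => True
  | .p', .P _ | .P _, .p' | .q', .Q _ | .Q _, .q' | .P _, .Q _ | .Q _, .P _ => True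
  | _, _ => False

lemma adj_iff {k : ℕ} {a b : EGVert k} : (EG k).Adj a b ↔ AdjCases a b := by
  cases a <;> cases b <;> simp only [EG, SimpleGraph.fromRel_adj, ne_eq, reduceCtorEq,
    not_false_eq_true, EGVert.P.injEq, EGVert.Q.injEq, exists_false, and_false, or_false,
    false_or, and_true, exists_and_left, exists_and_right, or_self, exists_eq', and_self, AdjCases]

lemma adj_p'_P (k : ℕ) (i : Fin (k - 1)) : (EG k).Adj .p' (.P i) := adj_iff.2 trivial

lemma adj_q'_Q (k : ℕ) (j : Fin (k - 1)) : (EG k).Adj .q' (.Q j) := adj_iff.2 trivial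

lemma adj_P_Q (k : ℕ) (i j : Fin (k - 1)) : (EG k).Adj (.P i) (.Q j) := adj_iff.2 trivial

def edgeP'P (k : ℕ) (i : Fin (k - 1)) : (EG k).edgeSet := ⟨s(.p', .P i), adj_p'_P k i⟩

def edgeQ'Q (k : ℕ) (j : Fin (k - 1)) : (EG k).edgeSet := ⟨s(.q', .Q j), adj_q'_Q k j⟩

def edgePQ (k : ℕ) (i j : Fin (k - 1)) : (EG k).edgeSet := ⟨s(.P i, .Q j), adj_P_Q k i j⟩

lemma edge_cases {k : ℕ} (e : (EG k).edgeSet) :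
    e = edgePP k ∨ e = edgeQQ k ∨ (∃ i, e = edgeP'P k i) ∨ (∃ j, e = edgeQ'Q k j) ∨
      ∃ i j, e = edgePQ k i j := by
  obtain ⟨e, he⟩ := e
  induction e using Sym2.ind with
  | _ a b =>
    rw [SimpleGraph.mem_edgeSet, adj_iff] at he
    cases a <;> cases b <;> simp only [AdjCases] at he <;>
      simp [edgePP, edgeQQ, edgeP'P, edgeQ'Q, edgePQ, Subtype.ext_iff]

def pairColor (k α : ℕ) : EGVert k → EGVert k → ℕ
  | .p, .p' | .p', .p | .q, .q' | .q', .q => α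
  | .p', .P i | .P i, .p' => skipColor α i
  | .P i, .Q j | .Q j, .P i => shiftColor k (skipColor α i) j
  | .q', .Q j | .Q j, .q' => shiftColor k α j
  | _, _ => 0

lemma pairColor_comm (k α : ℕ) (a b : EGVert k) : pairColor k α a b = pairColor k α b a := by
  cases a <;> cases b <;> rfl

def level {k : ℕ} : EGVert k → ℕ
  | .p | .p' | .P _ => 0
  | .Q _ => 1
  | .q' => 2
  | .q => 3

def edgeColor (k α : ℕ) (e : (EG k).edgeSet) : ℕ :=
  Sym2.lift ⟨pairColor k α, pairColor_comm k α⟩ e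

def edgeLayer {k : ℕ} (e : (EG k).edgeSet) : ℕ :=
  Sym2.lift ⟨fun a b : EGVert k => max (level a) (level b), fun _ _ => max_comm _ _⟩ e

def edgeRank (k α : ℕ) (e : (EG k).edgeSet) : ℕ := k * edgeLayer e + edgeColor k α e

section
variable {k α : ℕ}

@[simp] lemma edgeColor_edgePP : edgeColor k α (edgePP k) = α := rfl
@[simp] lemma edgeColor_edgeQQ : edgeColor k α (edgeQQ k) = α := rfl
@[simp] lemma edgeColor_edgeP'P (i) : edgeColor k α (edgeP'P k i) = skipColor α i := rfl
@[simp] lemma edgeColor_edgeQ'Q (j) : edgeColor k α (edgeQ'Q k j) = shiftColor k α j := rfl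
@[simp] lemma edgeColor_edgePQ (i j) :
    edgeColor k α (edgePQ k i j) = shiftColor k (skipColor α i) j := rfl

@[simp] lemma edgeLayer_edgeQQ : edgeLayer (edgeQQ k) = 3 := rfl
@[simp] lemma edgeLayer_edgeP'P (i) : edgeLayer (edgeP'P k i) = 0 := rfl
@[simp] lemma edgeLayer_edgeQ'Q (j) : edgeLayer (edgeQ'Q k j) = 2 := rfl
@[simp] lemma edgeLayer_edgePQ (i j) : edgeLayer (edgePQ k i j) = 1 := rfl

lemma pairColor_injOn_neighbors (hα : 0 < α) (hαk : α ≤ k) {v w w' : EGVert k}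
    (hw : (EG k).Adj v w) (hw' : (EG k).Adj v w') (h : pairColor k α v w = pairColor k α v w') :
    w = w' := by
  have hlt (i : Fin (k - 1)) : (i : ℕ) + 1 < k := by have := i.isLt; omega
  have hskip (i : Fin (k - 1)) : skipColor α i ≤ k := skipColor_le (hlt i)
  have star_p' {i i' : Fin (k - 1)} (h : skipColor α i = skipColor α i') : i = i' :=
    Fin.ext (skipColor_injective h)
  have row_ne (i j : Fin (k - 1)) : shiftColor k (skipColor α i) j ≠ skipColor α i :=
    shiftColor_ne_self (hskip i) (hlt j)
  have row_inj {i j j' : Fin (k - 1)}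
      (h : shiftColor k (skipColor α i) j = shiftColor k (skipColor α i) j') : j = j' :=
    Fin.ext (shiftColor_right_injective (hskip i) (by omega) (by omega) h)
  have col_inj {i i' j : Fin (k - 1)}
      (h : shiftColor k (skipColor α i) j = shiftColor k (skipColor α i') j) : i = i' :=
    star_p' (shiftColor_left_injective (skipColor_pos _) (hskip i) (skipColor_pos _) (hskip i')
      (by omega) h)
  have col_ne (i j : Fin (k - 1)) : shiftColor k (skipColor α i) j ≠ shiftColor k α j :=
    fun h => skipColor_ne _
      (shiftColor_left_injective (skipColor_pos _) (hskip i) hα hαk (by omega) h)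
  have star_q' {j j' : Fin (k - 1)} (h : shiftColor k α j = shiftColor k α j') : j = j' :=
    Fin.ext (shiftColor_right_injective hαk (by omega) (by omega) h)
  rw [adj_iff] at hw hw'
  cases v <;> cases w <;> simp only [AdjCases] at hw <;> cases w' <;>
    simp only [AdjCases] at hw' <;>
    simp only [pairColor, reduceCtorEq, EGVert.P.injEq, EGVert.Q.injEq] at h ⊢
  all_goals first
    | exact skipColor_ne _ h | exact skipColor_ne _ h.symm | exact star_p' h
    | exact row_ne _ _ h | exact row_ne _ _ h.symm | exact row_inj h
    | exact col_ne _ _ h | exact col_ne _ _ h.symm | exact col_inj h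
    | exact shiftColor_ne_self hαk (hlt _) h | exact shiftColor_ne_self hαk (hlt _) h.symm
    | exact star_q' h

lemma edgeColor_pos (hα : 0 < α) (e : (EG k).edgeSet) : 0 < edgeColor k α e := by
  rcases edge_cases e with rfl | rfl | ⟨i, rfl⟩ | ⟨j, rfl⟩ | ⟨i, j, rfl⟩
  · exact hα
  · exact hα
  · exact skipColor_pos _
  · exact shiftColor_pos
  · exact shiftColor_pos

lemma edgeColor_le (hαk : α ≤ k) (e : (EG k).edgeSet) : edgeColor k α e ≤ k := by
  rcases edge_cases e with rfl | rfl | ⟨i, rfl⟩ | ⟨j, rfl⟩ | ⟨i, j, rfl⟩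
  · exact hαk
  · exact hαk
  · exact skipColor_le (by have := i.isLt; omega)
  · exact shiftColor_le (by have := j.isLt; omega)
  · exact shiftColor_le (by have := j.isLt; omega)

lemma exists_adj_color_eq_of_edgeQQ (hα : 0 < α) (hαk : α ≤ k) {s : ℕ} (hs : 0 < s)
    (hsα : s < α) : ∃ f, (EG k).lineGraph.Adj (edgeQQ k) f ∧ edgeColor k α f = s ∧
      edgeRank k α f < edgeRank k α (edgeQQ k) := by
  obtain ⟨m, hm, hms⟩ := exists_shiftColor_eq hs (by omega) hα hαk hsα.ne
  have hr : edgeRank k α (edgeQ'Q k ⟨m, by omega⟩) < edgeRank k α (edgeQQ k) := by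
    simp only [edgeRank, edgeLayer_edgeQ'Q, edgeLayer_edgeQQ, edgeColor_edgeQ'Q, edgeColor_edgeQQ]
    omega
  exact ⟨_, lineGraph_adj_iff_exists.2
      ⟨ne_of_apply_ne _ hr.ne', .q', Sym2.mem_mk_right _ _, Sym2.mem_mk_left _ _⟩, hms, hr⟩

lemma exists_adj_color_eq_of_edgeP'P (hα : 0 < α) (hαk : α ≤ k) (i : Fin (k - 1)) {s : ℕ}
    (hs : 0 < s) (hsi : s < skipColor α i) :
    ∃ f, (EG k).lineGraph.Adj (edgeP'P k i) f ∧ edgeColor k α f = s ∧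
      (f = edgePP k ∨ edgeRank k α f < edgeRank k α (edgeP'P k i)) := by
  by_cases hsα : s = α
  · refine ⟨edgePP k, lineGraph_adj_iff_exists.2
      ⟨ne_of_apply_ne (edgeColor k α) ?_, .p', Sym2.mem_mk_left _ _, Sym2.mem_mk_right _ _⟩,
      hsα.symm, .inl rfl⟩
    simp only [edgeColor_edgeP'P, edgeColor_edgePP]; omega
  obtain ⟨i', rfl⟩ := exists_skipColor_eq hα hs hsα
  have hi' : i' + 1 < k :=
    lt_of_skipColor_le hαk (hsi.le.trans (skipColor_le (by have := i.isLt; omega)))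
  have hr : edgeRank k α (edgeP'P k ⟨i', by omega⟩) < edgeRank k α (edgeP'P k i) := by
    simpa [edgeRank] using hsi
  exact ⟨_, lineGraph_adj_iff_exists.2
      ⟨ne_of_apply_ne _ hr.ne', .p', Sym2.mem_mk_left _ _, Sym2.mem_mk_left _ _⟩, rfl, .inr hr⟩

lemma exists_adj_color_eq_of_edgeQ'Q (hα : 0 < α) (hαk : α ≤ k) (j : Fin (k - 1)) {s : ℕ}
    (hs : 0 < s) (hsj : s < shiftColor k α j) :
    ∃ f, (EG k).lineGraph.Adj (edgeQ'Q k j) f ∧ edgeColor k α f = s ∧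
      edgeRank k α f < edgeRank k α (edgeQ'Q k j) := by
  have hj := j.isLt
  obtain ⟨c, hc, hck, hcs⟩ :=
    exists_shiftColor_eq_of_right (m := j) hs (hsj.le.trans (shiftColor_le (by omega))) (by omega)
  have hcα : c ≠ α := by rintro rfl; omega
  obtain ⟨i, rfl⟩ := exists_skipColor_eq hα hc hcα
  have hi : i < k - 1 := by have := lt_of_skipColor_le hαk hck; omega
  have hr : edgeRank k α (edgePQ k ⟨i, hi⟩ j) <
      edgeRank k α (edgeQ'Q k j) := by
    simp only [edgeRank, edgeLayer_edgePQ, edgeLayer_edgeQ'Q, edgeColor_edgePQ, edgeColor_edgeQ'Q]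
    omega
  exact ⟨_, lineGraph_adj_iff_exists.2
      ⟨ne_of_apply_ne _ hr.ne', .Q j, Sym2.mem_mk_right _ _, Sym2.mem_mk_right _ _⟩, hcs, hr⟩

lemma exists_adj_color_eq_of_edgePQ (hα : 0 < α) (hαk : α ≤ k) (i j : Fin (k - 1)) {s : ℕ}
    (hs : 0 < s) (hsij : s < shiftColor k (skipColor α i) j) :
    ∃ f, (EG k).lineGraph.Adj (edgePQ k i j) f ∧ edgeColor k α f = s ∧
      edgeRank k α f < edgeRank k α (edgePQ k i j) := by
  have hi := skipColor_le (α := α) (by have := i.isLt; omega : (i : ℕ) + 1 < k)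
  by_cases hsi : s = skipColor α i
  · have hr : edgeRank k α (edgeP'P k i) < edgeRank k α (edgePQ k i j) := by
      simp only [edgeRank, edgeLayer_edgePQ, edgeLayer_edgeP'P, edgeColor_edgePQ,
        edgeColor_edgeP'P]
      omega
    exact ⟨_, lineGraph_adj_iff_exists.2
      ⟨ne_of_apply_ne _ hr.ne', .P i, Sym2.mem_mk_left _ _, Sym2.mem_mk_right _ _⟩, hsi.symm, hr⟩
  obtain ⟨m, hm, hms⟩ := exists_shiftColor_eq hs (hsij.le.trans (shiftColor_le (by omega)))
    (skipColor_pos _) hi hsi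
  have hr : edgeRank k α (edgePQ k i ⟨m, by omega⟩) < edgeRank k α (edgePQ k i j) := by
    simp only [edgeRank, edgeLayer_edgePQ, edgeColor_edgePQ, hms]
    omega
  exact ⟨_, lineGraph_adj_iff_exists.2
      ⟨ne_of_apply_ne _ hr.ne', .P i, Sym2.mem_mk_left _ _, Sym2.mem_mk_left _ _⟩, hms, hr⟩

lemma exists_adj_color_eq (hα : 0 < α) (hαk : α ≤ k) {e : (EG k).edgeSet} (he : e ≠ edgePP k)
    {s : ℕ} (hs : 0 < s) (hse : s < edgeColor k α e) :
    ∃ f, (EG k).lineGraph.Adj e f ∧ edgeColor k α f = s ∧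
      (f = edgePP k ∨ edgeRank k α f < edgeRank k α e) := by
  rcases edge_cases e with rfl | rfl | ⟨i, rfl⟩ | ⟨j, rfl⟩ | ⟨i, j, rfl⟩
  · exact absurd rfl he
  · obtain ⟨f, hf⟩ := exists_adj_color_eq_of_edgeQQ hα hαk hs hse
    exact ⟨f, hf.1, hf.2.1, .inr hf.2.2⟩
  · exact exists_adj_color_eq_of_edgeP'P hα hαk i hs hse
  · obtain ⟨f, hf⟩ := exists_adj_color_eq_of_edgeQ'Q hα hαk j hs hse
    exact ⟨f, hf.1, hf.2.1, .inr hf.2.2⟩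
  · obtain ⟨f, hf⟩ := exists_adj_color_eq_of_edgePQ hα hαk i j hs hse
    exact ⟨f, hf.1, hf.2.1, .inr hf.2.2⟩

lemma exists_adj_earlier (hk : 2 ≤ k) (hα : 0 < α) {e : (EG k).edgeSet} (he : e ≠ edgePP k) :
    ∃ f, (EG k).lineGraph.Adj e f ∧ (f = edgePP k ∨ edgeRank k α f < edgeRank k α e) := by
  have h0 : 0 < k - 1 := by omega
  rcases edge_cases e with rfl | rfl | ⟨i, rfl⟩ | ⟨j, rfl⟩ | ⟨i, j, rfl⟩
  · exact absurd rfl he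
  · have hr : edgeRank k α (edgeQ'Q k ⟨0, h0⟩) < edgeRank k α (edgeQQ k) := by
      have := shiftColor_le (c := α) (m := 0) (by omega : 0 < k)
      simp only [edgeRank, edgeLayer_edgeQ'Q, edgeLayer_edgeQQ, edgeColor_edgeQ'Q,
        edgeColor_edgeQQ]
      omega
    exact ⟨_, lineGraph_adj_iff_exists.2
      ⟨ne_of_apply_ne _ hr.ne', .q', Sym2.mem_mk_right _ _, Sym2.mem_mk_left _ _⟩, .inr hr⟩
  · exact ⟨edgePP k, lineGraph_adj_iff_exists.2
      ⟨by simp [edgeP'P, edgePP, Subtype.ext_iff], .p', Sym2.mem_mk_left _ _,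
        Sym2.mem_mk_right _ _⟩, .inl rfl⟩
  · have hr : edgeRank k α (edgePQ k ⟨0, h0⟩ j) < edgeRank k α (edgeQ'Q k j) := by
      have := shiftColor_le (c := skipColor α 0) (m := j) (by omega : 0 < k)
      simp only [edgeRank, edgeLayer_edgePQ, edgeLayer_edgeQ'Q, edgeColor_edgePQ,
        edgeColor_edgeQ'Q]
      have := shiftColor_pos (k := k) (c := α) (m := j)
      omega
    exact ⟨_, lineGraph_adj_iff_exists.2
      ⟨ne_of_apply_ne _ hr.ne', .Q j, Sym2.mem_mk_right _ _, Sym2.mem_mk_right _ _⟩, .inr hr⟩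
  · have hr : edgeRank k α (edgeP'P k i) < edgeRank k α (edgePQ k i j) := by
      have := skipColor_le (α := α) (by have := i.isLt; omega : (i : ℕ) + 1 < k)
      simp only [edgeRank, edgeLayer_edgePQ, edgeLayer_edgeP'P, edgeColor_edgePQ,
        edgeColor_edgeP'P]
      have := shiftColor_pos (k := k) (c := skipColor α i) (m := j)
      omega
    exact ⟨_, lineGraph_adj_iff_exists.2
      ⟨ne_of_apply_ne _ hr.ne', .P i, Sym2.mem_mk_left _ _, Sym2.mem_mk_right _ _⟩, .inr hr⟩

theorem isCGCFrom_edgeColor (hk : 2 ≤ k) (hα : 0 < α) (hαk : α ≤ k) :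
    IsCGCFrom (EG k).lineGraph (edgePP k) α (edgeColor k α) :=
  isCGCFrom_of_rank (EG k).lineGraph (r := edgeRank k α)
    (fun _ _ => lineGraph_adj_lift_ne (EG k) (pairColor_comm k α)
      fun _ _ _ => pairColor_injOn_neighbors hα hαk)
    (fun e _ => edgeColor_pos hα e)
    (fun _ he _ hs hse => exists_adj_color_eq hα hαk he hs hse)
    (fun _ he => exists_adj_earlier hk hα he)

end

end EG

theorem statement12 (k : ℕ) (hk : 7 ≤ k) (α : ℕ) (hα : α ∈ Finset.Icc 1 k) :
    ∃ f : (EG k).edgeSet → ℕ,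
      IsCGCFrom ((EG k).lineGraph) (edgePP k) α f ∧ ∀ e, f e ≤ k := by
  obtain ⟨hα1, hαk⟩ := Finset.mem_Icc.1 hα
  exact ⟨EG.edgeColor k α, EG.isCGCFrom_edgeColor (by omega) hα1 hαk, EG.edgeColor_le hαk⟩
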